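/- arXiv:1201.0496 — 4 statements merged into one kernel-verified Lean document; each statement's English description precedes it below -/
import Mathlib

section
/- Every continuous group automorphism Φ of GL(n,ℂ) (a group automorphism that is continuous with continuous inverse) satisfying Φ(h) = h for all invertible diagonal matrices h is conjugation by a diagonal matrix: there exists t ∈ T such that Φ(g) = t g t⁻¹ for all g ∈ GL(n,ℂ). -/
/-!
Conjugating by the diagonal matrix with `s` in slot `i` sends the root element `1 + c E_ij` to
`1 + s c E_ij`, and `Φ` commutes with this conjugation. So the entries of `Φ(1 + s E_ij)` are
those of `X = Φ(1 + E_ij)` multiplied by powers of `s`; letting `s → 0` and using continuity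
forces every entry of `X` other than the `(i, j)` one to agree with the identity matrix. Hence
`Φ(1 + c E_ij) = 1 + μ_ij c E_ij`. The commutator relation `[1 + a E_ij, 1 + b E_jk] = 1 + ab E_ik`
and the braid relation make `μ` a multiplicative cocycle, so `μ_ij = t_i / t_j`, and then `Φ`
agrees with conjugation by `diag t` on transvections and on diagonal matrices, which generate
`GL(n)`.
-/

open Matrix
open scoped commutatorElement

theorem exists_eq_mul_inv_of_cocycle {G ι : Type*} [Group G] [Nonempty ι]
    (μ : ∀ i j : ι, i ≠ j → G)
    (htrans : ∀ i j k (hij : i ≠ j) (hjk : j ≠ k) (hik : i ≠ k), μ i k hik = μ i j hij * μ j k hjk)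
    (hsymm : ∀ i j (hij : i ≠ j), μ i j hij * μ j i hij.symm = 1) :
    ∃ t : ι → G, ∀ i j (hij : i ≠ j), μ i j hij = t i * (t j)⁻¹ := by
  classical
  obtain ⟨z⟩ := ‹Nonempty ι›
  have hinv : ∀ j (hj : j ≠ z), μ z j hj.symm = (μ j z hj)⁻¹ := fun j hj ↦
    eq_inv_of_mul_eq_one_right (hsymm j z hj)
  refine ⟨fun i ↦ if h : i = z then 1 else μ i z h, fun i j hij ↦ ?_⟩
  by_cases hi : i = z <;> by_cases hj : j = z
  · exact absurd (hi.trans hj.symm) hij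
  · subst hi
    simp [hj, hinv]
  · subst hj
    simp [hi]
  · simp [hi, hj, htrans i z j hi (Ne.symm hj) hij, hinv]

theorem Matrix.transvection_eq_one_add_smul {ι R : Type*} [DecidableEq ι] [CommRing R]
    (i j : ι) (c : R) : transvection i j c = 1 + c • single i j 1 := by
  rw [transvection, smul_single, smul_eq_mul, mul_one]

theorem Matrix.eq_one_apply_of_continuous {ι 𝕜 : Type*} [DecidableEq ι]
    [NontriviallyNormedField 𝕜] {Y : 𝕜 → Matrix ι ι 𝕜} (hY : Continuous Y) (hY0 : Y 0 = 1)
    {k l : ι} {p : 𝕜 → 𝕜} (hp : Continuous p) (hp0 : k = l → p 0 = 1) {x : 𝕜}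
    (h : ∀ s ≠ 0, Y s k l * p s = x) : x = (1 : Matrix ι ι 𝕜) k l := by
  have h0 : Y 0 k l * p 0 = x :=
    congrFun (((hY.matrix_elem k l).mul hp).ext_on (dense_compl_singleton 0) continuous_const h) 0
  rw [← h0, hY0]
  by_cases hkl : k = l
  · simp [hp0 hkl]
  · simp [one_apply_ne hkl]

namespace Matrix.GeneralLinearGroup

variable {ι R : Type*} [Fintype ι] [DecidableEq ι] [CommRing R] {i j k : ι}

def diagonal : (ι → Rˣ) →* GL ι R :=
  (Units.map (diagonalRingHom ι R).toMonoidHom).comp MulEquiv.piUnits.symm.toMonoidHom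

@[simp]
lemma coe_diagonal (t : ι → Rˣ) :
    (diagonal t : Matrix ι ι R) = Matrix.diagonal fun k ↦ (t k : R) := rfl

lemma isDiag_diagonal (t : ι → Rˣ) : (diagonal t : Matrix ι ι R).IsDiag := by
  simp [Matrix.isDiag_diagonal]

lemma diagonal_mul_mul_inv_apply (t : ι → Rˣ) (g : GL ι R) (k l : ι) :
    ((diagonal t * g * (diagonal t)⁻¹ : GL ι R) : Matrix ι ι R) k l
      = t k * (g : Matrix ι ι R) k l * ((t l)⁻¹ : Rˣ) := by
  rw [← map_inv, Units.val_mul, Units.val_mul, coe_diagonal, coe_diagonal, mul_diagonal,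
    diagonal_mul]
  rfl

def transvection (hij : i ≠ j) (c : R) : GL ι R :=
  SpecialLinearGroup.toGL (SpecialLinearGroup.transvection hij c)

@[simp]
lemma coe_transvection (hij : i ≠ j) (c : R) :
    (transvection hij c : Matrix ι ι R) = Matrix.transvection i j c := rfl

lemma transvection_apply_same (hij : i ≠ j) (c : R) :
    (transvection hij c : Matrix ι ι R) i j = c := by
  simp [Matrix.transvection, one_apply_ne hij]

@[simp]
lemma transvection_zero (hij : i ≠ j) : transvection hij (0 : R) = 1 :=
  Units.ext (Matrix.transvection_zero i j)

lemma transvection_inv (hij : i ≠ j) (c : R) :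
    (transvection hij c)⁻¹ = transvection hij (-c) := by
  rw [transvection, ← map_inv, SpecialLinearGroup.transvection_inv, transvection]

lemma transvection_injective (hij : i ≠ j) :
    Function.Injective (transvection hij : R → GL ι R) := fun a b h ↦ by
  simpa [transvection_apply_same] using congr(($h : Matrix ι ι R) i j)

lemma diagonal_mul_transvection_mul_inv (t : ι → Rˣ) (hij : i ≠ j) (c : R) :
    diagonal t * transvection hij c * (diagonal t)⁻¹
      = transvection hij ((t i : R) * c * ((t j)⁻¹ : Rˣ)) := by
  ext k l
  rw [diagonal_mul_mul_inv_apply]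
  by_cases hkl : k = l
  · subst hkl
    have : ¬(i = k ∧ j = k) := fun h ↦ hij (h.1.trans h.2.symm)
    simp [Matrix.transvection, this]
  · simp only [coe_transvection, Matrix.transvection, Matrix.add_apply, one_apply_ne hkl,
      single_apply]
    split_ifs with h
    · rcases h with ⟨rfl, rfl⟩
      simp
    · simp

lemma commutatorElement_transvection (hij : i ≠ j) (hjk : j ≠ k) (hik : i ≠ k) (a b : R) :
    ⁅transvection hij a, transvection hjk b⁆ = transvection hik (a * b) := by
  rw [commutatorElement_def, transvection_inv, transvection_inv]
  ext : 1
  simp only [Units.val_mul, coe_transvection, transvection_eq_one_add_smul, add_mul, mul_add,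
    one_mul, mul_one, smul_mul_smul, single_mul_single_same, smul_zero, zero_mul,
    single_mul_single_of_ne _ _ _ _ hij.symm, single_mul_single_of_ne _ _ _ _ hjk.symm,
    single_mul_single_of_ne _ _ _ _ hik.symm]
  module

lemma transvection_braid (hij : i ≠ j) :
    transvection hij (1 : R) * transvection hij.symm (-1) * transvection hij 1
      = transvection hij.symm (-1) * transvection hij 1 * transvection hij.symm (-1) := by
  ext : 1
  simp only [Units.val_mul, coe_transvection, transvection_eq_one_add_smul, add_mul, mul_add,
    one_mul, mul_one, smul_mul_smul, single_mul_single_same, smul_zero,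
    single_mul_single_of_ne _ _ _ _ hij.symm, single_mul_single_of_ne _ _ _ _ hij]
  module

lemma mul_eq_neg_one_of_transvection_braid [IsDomain R] (hij : i ≠ j) {a b : R} (ha : a ≠ 0)
    (h : transvection hij a * transvection hij.symm b * transvection hij a
      = transvection hij.symm b * transvection hij a * transvection hij.symm b) :
    a * b = -1 := by
  have hentry : a = 0 ∨ 1 + b * a = 0 := by
    have := congr(($h : Matrix ι ι R) i j)
    simp only [Units.val_mul, coe_transvection, Matrix.mul_assoc, transvection_mul_apply_same,
      transvection_mul_apply_of_ne _ _ _ _ hij] at this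
    simpa [Matrix.transvection, hij, hij.symm] using this
  linear_combination hentry.resolve_left ha

lemma monoidHom_ext {K G : Type*} [Field K] [Group G] {f g : GL ι K →* G}
    (hdiag : ∀ t, f (diagonal t) = g (diagonal t))
    (htransvection : ∀ (i j : ι) (hij : i ≠ j) (c : K),
      f (transvection hij c) = g (transvection hij c)) : f = g := by
  ext u
  refine diagonal_transvection_induction_of_det_ne_zero
    (fun M ↦ ∀ u : GL ι K, (u : Matrix ι ι K) = M → f u = g u) u (det_ne_zero u) ?_ ?_ ?_ u rfl
  · intro D hD u hu
    have hD' : ∀ k, D k ≠ 0 := by simpa [Finset.prod_ne_zero_iff] using hD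
    obtain rfl : u = diagonal fun k ↦ Units.mk0 (D k) (hD' k) := Units.ext (by simpa using hu)
    exact hdiag _
  · rintro ⟨i, j, hij, c⟩ u hu
    obtain rfl : u = transvection hij c := Units.ext hu
    exact htransvection i j hij c
  · intro A B hA hB hfA hfB u hu
    obtain rfl : u = mkOfDetNeZero A hA * mkOfDetNeZero B hB := Units.ext hu
    rw [map_mul, map_mul, hfA _ rfl, hfB _ rfl]

lemma continuous_transvection [TopologicalSpace R] [IsTopologicalRing R] (hij : i ≠ j) :
    Continuous (transvection hij : R → GL ι R) := by
  have hval : Continuous fun c : R ↦ Matrix.transvection i j c := by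
    simp only [transvection_eq_one_add_smul]
    fun_prop
  rw [Units.continuous_iff]
  simp only [transvection_inv]
  exact ⟨hval, hval.comp continuous_neg⟩

section Continuous

variable {𝕜 : Type*} [NontriviallyNormedField 𝕜] {Y : 𝕜 → GL ι 𝕜}

theorem coe_eq_transvection_of_continuous (hY : Continuous Y) (hY0 : Y 0 = 1) (hij : i ≠ j)
    (hconj : ∀ t : ι → 𝕜ˣ,
      Y ((t i : 𝕜) * ((t j)⁻¹ : 𝕜ˣ)) = diagonal t * Y 1 * (diagonal t)⁻¹) :
    (Y 1 : Matrix ι ι 𝕜) = Matrix.transvection i j ((Y 1 : Matrix ι ι 𝕜) i j) := by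
  have hYm : Continuous fun s ↦ (Y s : Matrix ι ι 𝕜) := Units.continuous_val.comp hY
  have hYm0 : (Y 0 : Matrix ι ι 𝕜) = 1 := by rw [hY0, Units.val_one]
  have hentry (t : ι → 𝕜ˣ) (k l : ι) : (Y ((t i : 𝕜) * ((t j)⁻¹ : 𝕜ˣ)) : Matrix ι ι 𝕜) k l
      = t k * (Y 1 : Matrix ι ι 𝕜) k l * ((t l)⁻¹ : 𝕜ˣ) := by
    rw [← diagonal_mul_mul_inv_apply, ← hconj]
  ext k l
  by_cases hkl : k = i ∧ l = j
  · rw [hkl.1, hkl.2]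
    simp [Matrix.transvection, one_apply_ne hij]
  have hone : Matrix.transvection i j ((Y 1 : Matrix ι ι 𝕜) i j) k l = (1 : Matrix ι ι 𝕜) k l := by
    simp only [Matrix.transvection, Matrix.add_apply, single_apply, add_eq_left, ite_eq_right_iff]
    rintro ⟨rfl, rfl⟩
    exact absurd ⟨rfl, rfl⟩ hkl
  rw [hone]
  -- Row `i` is rescaled by the family `t_i = s`, so there we use `t_j = s⁻¹` instead.
  by_cases hki : k = i
  · subst hki
    have hlj : l ≠ j := fun h ↦ hkl ⟨rfl, h⟩
    refine eq_one_apply_of_continuous hYm hYm0 continuous_const (fun _ ↦ rfl) fun s hs ↦ ?_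
    simpa [Pi.mulSingle_apply, hij, hlj] using hentry (Pi.mulSingle j (Units.mk0 s hs)⁻¹) k l
  · refine eq_one_apply_of_continuous hYm hYm0 (p := fun s ↦ if l = i then s else 1)
      (continuous_id.if_const _ continuous_const) (by rintro rfl; simp [hki]) fun s hs ↦ ?_
    have := hentry (Pi.mulSingle i (Units.mk0 s hs)) k l
    by_cases hli : l = i <;> simp_all [hij.symm]

theorem eq_transvection_of_continuous (hY : Continuous Y) (hY0 : Y 0 = 1) (hij : i ≠ j)
    (hconj : ∀ t : ι → 𝕜ˣ,
      Y ((t i : 𝕜) * ((t j)⁻¹ : 𝕜ˣ)) = diagonal t * Y 1 * (diagonal t)⁻¹) (c : 𝕜) :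
    Y c = transvection hij ((Y 1 : Matrix ι ι 𝕜) i j * c) := by
  rcases eq_or_ne c 0 with rfl | hc
  · rw [mul_zero, transvection_zero, hY0]
  have hY1 := coe_eq_transvection_of_continuous hY hY0 hij hconj
  set μ := (Y 1 : Matrix ι ι 𝕜) i j
  have := hconj (Pi.mulSingle i (Units.mk0 c hc))
  simp only [Pi.mulSingle_eq_same, Pi.mulSingle_eq_of_ne hij.symm, inv_one, Units.val_one,
    Units.val_mk0, mul_one] at this
  rw [this, (Units.ext hY1 : Y 1 = transvection hij μ), diagonal_mul_transvection_mul_inv]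
  simp [Pi.mulSingle_eq_of_ne hij.symm, mul_comm]

theorem exists_map_transvection_eq_of_continuous {f : GL ι 𝕜 →* GL ι 𝕜}
    (hf : Function.Injective f) (hf_cont : Continuous f)
    (hf_diag : ∀ t, f (diagonal t) = diagonal t) (hij : i ≠ j) :
    ∃ μ : 𝕜ˣ, ∀ c, f (transvection hij c) = transvection hij (μ * c) := by
  have hY := eq_transvection_of_continuous (Y := fun c ↦ f (transvection hij c))
    (hf_cont.comp (continuous_transvection hij)) (by simp) hij fun t ↦ by
      rw [← mul_one (t i : 𝕜), ← diagonal_mul_transvection_mul_inv, map_mul, map_mul, map_inv,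
        hf_diag]
  set μ := (f (transvection hij 1) : Matrix ι ι 𝕜) i j
  have hμ : μ ≠ 0 := fun h ↦ by
    have : f (transvection hij 1) = f (transvection hij 0) := by
      rw [hY, hY, h, zero_mul, zero_mul]
    exact one_ne_zero (transvection_injective hij (hf this))
  exact ⟨Units.mk0 μ hμ, hY⟩

end Continuous

variable {K : Type*} [Field K] {f : GL ι K →* GL ι K} {μ : ∀ i j : ι, i ≠ j → Kˣ}

lemma scale_trans_of_map_transvection
    (hμ : ∀ i j (hij : i ≠ j) c, f (transvection hij c) = transvection hij (μ i j hij * c))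
    (hij : i ≠ j) (hjk : j ≠ k) (hik : i ≠ k) : μ i k hik = μ i j hij * μ j k hjk := by
  have := congr(f $(commutatorElement_transvection hij hjk hik (1 : K) 1))
  rw [map_commutatorElement, hμ, hμ, hμ, commutatorElement_transvection hij hjk hik] at this
  exact Units.ext (by simpa using (transvection_injective hik this).symm)

lemma scale_symm_of_map_transvection
    (hμ : ∀ i j (hij : i ≠ j) c, f (transvection hij c) = transvection hij (μ i j hij * c))
    (hij : i ≠ j) : μ i j hij * μ j i hij.symm = 1 := by
  have := congr(f $(transvection_braid hij))
  simp only [map_mul, hμ, mul_one] at this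
  have := mul_eq_neg_one_of_transvection_braid hij (μ i j hij).ne_zero this
  ext
  simpa using this

end Matrix.GeneralLinearGroup

open Matrix.GeneralLinearGroup in
theorem continuous_aut_fixing_torus_is_inner_by_diagonal_general (n : ℕ) (hn : 1 ≤ n)
    (Φ : GL (Fin n) ℂ ≃* GL (Fin n) ℂ)
    (hΦ : Continuous (⇑Φ))
    (hfix : ∀ h : GL (Fin n) ℂ, (h : Matrix (Fin n) (Fin n) ℂ).IsDiag → Φ h = h) :
    ∃ t : GL (Fin n) ℂ, (t : Matrix (Fin n) (Fin n) ℂ).IsDiag ∧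
      ∀ g : GL (Fin n) ℂ, Φ g = t * g * t⁻¹ := by
  have hfix_diagonal : ∀ s, Φ (diagonal s) = diagonal s := fun s ↦ hfix _ (isDiag_diagonal s)
  choose μ hμ using fun i j (hij : i ≠ j) ↦
    exists_map_transvection_eq_of_continuous (f := Φ.toMonoidHom) Φ.injective hΦ hfix_diagonal hij
  have : Nonempty (Fin n) := ⟨⟨0, hn⟩⟩
  obtain ⟨t, ht⟩ := exists_eq_mul_inv_of_cocycle μ
    (fun _ _ _ ↦ scale_trans_of_map_transvection hμ) (fun _ _ ↦ scale_symm_of_map_transvection hμ)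
  refine ⟨diagonal t, isDiag_diagonal t, fun g ↦ ?_⟩
  suffices Φ.toMonoidHom = (MulAut.conj (diagonal t)).toMonoidHom from congr($this g)
  refine monoidHom_ext (fun s ↦ ?_) (fun i j hij c ↦ ?_)
  · simp [hfix_diagonal, ← map_mul, ← map_inv, mul_comm t]
  · rw [hμ, MulEquiv.coe_toMonoidHom, MulAut.conj_apply, diagonal_mul_transvection_mul_inv, ht,
      Units.val_mul, mul_right_comm]

/-- Every continuous group automorphism `Φ` of `GL(n,ℂ)` (continuous with
continuous inverse) that fixes every invertible diagonal matrix is conjugation by an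
invertible diagonal matrix. -/
theorem continuous_aut_fixing_torus_is_inner_by_diagonal (n : ℕ) (hn : 1 ≤ n)
    (Φ : GL (Fin n) ℂ ≃* GL (Fin n) ℂ)
    (hΦ : Continuous (⇑Φ)) (hΦsymm : Continuous (⇑Φ.symm))
    (hfix : ∀ h : GL (Fin n) ℂ, (h : Matrix (Fin n) (Fin n) ℂ).IsDiag → Φ h = h) :
    ∃ t : GL (Fin n) ℂ, (t : Matrix (Fin n) (Fin n) ℂ).IsDiag ∧
      ∀ g : GL (Fin n) ℂ, Φ g = t * g * t⁻¹ :=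
  continuous_aut_fixing_torus_is_inner_by_diagonal_general n hn Φ hΦ hfix
end

section
/- If C is a continuous group automorphism of GL(n,ℂ) (continuous with continuous inverse) satisfying C(h) = h⁻¹ for every invertible diagonal matrix h, then C ∘ C is the identity automorphism. -/
/-!
Conjugation by the diagonal torus shows that `C` sends the root subgroup `x_ij(c) = 1 + c E_ij`
into the matrices supported on the diagonal and on the entries `(i, j)`, `(j, i)`; the relations
`x_ij(c) ^ 2 = x_ij(2c)` and `x_ij(c)⁻¹ = x_ij(-c)`, which are again torus conjugations, then
force `C (x_ij(c)) = x_ji(ρ_ij c)`. The Weyl element `x_ij(1) x_ji(-1) x_ij(1)` swaps the `i`-th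
and `j`-th torus coordinates, and so does its image under `C`; this kills the `(i, i)` entry
`1 - ρ_ji ρ_ij` of that image, so `ρ_ji ρ_ij = 1`. Hence `C ∘ C` fixes all transvections and
all invertible diagonal matrices, and these generate `GL n`.
-/

open Matrix

namespace Matrix

section CommRing

variable {n R : Type*} [Fintype n] [DecidableEq n] [CommRing R]

def diagonalGL : (n → Rˣ) →* GL n R :=
  (Units.map (diagonalRingHom n R).toMonoidHom).comp MulEquiv.piUnits.symm.toMonoidHom

@[simp]
lemma coe_diagonalGL (t : n → Rˣ) :
    (diagonalGL t : Matrix n n R) = diagonal fun k => (t k : R) :=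
  rfl

@[simp]
lemma coe_diagonalGL_inv (t : n → Rˣ) :
    (((diagonalGL t)⁻¹ : GL n R) : Matrix n n R) = diagonal fun k => (((t k)⁻¹ : Rˣ) : R) :=
  rfl

def transvectionGL {i j : n} (hij : i ≠ j) (c : R) : GL n R :=
  ⟨transvection i j c, transvection i j (-c),
    by rw [transvection_mul_transvection_same _ _ hij, add_neg_cancel, transvection_zero],
    by rw [transvection_mul_transvection_same _ _ hij, neg_add_cancel, transvection_zero]⟩

variable {i j : n} (hij : i ≠ j)

@[simp]
lemma coe_transvectionGL (c : R) :
    (transvectionGL hij c : Matrix n n R) = transvection i j c :=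
  rfl

lemma transvectionGL_mul_transvectionGL (c d : R) :
    transvectionGL hij c * transvectionGL hij d = transvectionGL hij (c + d) :=
  Units.ext (transvection_mul_transvection_same _ _ hij c d)

@[simp]
lemma transvectionGL_zero : transvectionGL hij (0 : R) = 1 :=
  Units.ext (transvection_zero i j)

def weylGL : GL n R :=
  transvectionGL hij 1 * transvectionGL hij.symm (-1) * transvectionGL hij 1

lemma coe_weylGL :
    ((weylGL hij : GL n R) : Matrix n n R) =
      1 - single i i 1 - single j j 1 + single i j 1 - single j i 1 := by
  ext a b
  simp only [weylGL, Units.val_mul, coe_transvectionGL, transvection, Matrix.mul_add,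
    Matrix.add_mul, mul_one, one_mul, mul_neg, single_mul_single_same,
    single_mul_single_of_ne _ _ _ _ hij.symm, add_zero, add_apply, sub_apply, one_apply,
    single_apply]
  grind

lemma weylGL_mul_diagonalGL_mulSingle (u : Rˣ) :
    weylGL hij * diagonalGL (Pi.mulSingle i u) = diagonalGL (Pi.mulSingle j u) * weylGL hij := by
  ext a b
  simp only [Units.val_mul, coe_diagonalGL, coe_weylGL, diagonal_mul, mul_diagonal, sub_apply,
    add_apply, one_apply, single_apply, Pi.mulSingle_apply]
  grind

end CommRing

variable {n K : Type*} [Fintype n] [DecidableEq n] [Field K]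

lemma diagonalGL_mul_transvectionGL {i j : n} (hij : i ≠ j) (t : n → Kˣ) (c : K) :
    diagonalGL t * transvectionGL hij c = transvectionGL hij (t i * c / t j) * diagonalGL t := by
  ext a b
  simp only [Units.val_mul, coe_diagonalGL, coe_transvectionGL, diagonal_mul, mul_diagonal,
    transvection, add_apply, one_apply, single_apply]
  split_ifs <;> subst_vars <;> simp_all

lemma monoidHom_ext_diagonalGL_transvectionGL {G : Type*} [Monoid G] {f g : GL n K →* G}
    (hdiag : ∀ t, f (diagonalGL t) = g (diagonalGL t))
    (htransvec : ∀ (i j : n) (hij : i ≠ j) (c : K),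
      f (transvectionGL hij c) = g (transvectionGL hij c)) :
    f = g := by
  ext A
  refine diagonal_transvection_induction_of_det_ne_zero
    (fun M => ∀ B : GL n K, (B : Matrix n n K) = M → f B = g B) A A.det_ne_zero ?_ ?_ ?_ A rfl
  · intro d hd B hB
    have hd' (k : n) : d k ≠ 0 := by
      rw [det_diagonal] at hd
      exact Finset.prod_ne_zero_iff.mp hd k (Finset.mem_univ k)
    obtain rfl : B = diagonalGL fun k => Units.mk0 (d k) (hd' k) := Units.ext (by simp [hB])
    exact hdiag _
  · intro τ B hB
    obtain rfl : B = transvectionGL τ.hij τ.c := Units.ext hB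
    exact htransvec _ _ _ _
  · intro M N hM hN hfgM hfgN B hB
    obtain rfl : B = GeneralLinearGroup.mkOfDetNeZero M hM * .mkOfDetNeZero N hN :=
      Units.ext hB
    rw [map_mul, map_mul, hfgM _ rfl, hfgN _ rfl]

lemma diagonal_add_single_add_single_eq_transvection [CharZero K] {i j : n} (hij : i ≠ j)
    (d : n → K) (q r : K)
    (hinv : (diagonal d + single i j q + single j i r) *
      (diagonal d + single i j (-q) + single j i (-r)) = 1)
    (hsq : (diagonal d + single i j q + single j i r) *
      (diagonal d + single i j q + single j i r) =
        diagonal d + single i j (q / 2) + single j i (2 * r)) :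
    diagonal d + single i j q + single j i r = transvection j i r := by
  have hq : q = 0 := by
    have e1 : d i * d i + -(q * r) = 1 := by
      simpa [Matrix.add_mul, Matrix.mul_add, hij, hij.symm] using congrFun₂ hinv i i
    have e2 : d i * d i + q * r = d i := by
      simpa [Matrix.add_mul, Matrix.mul_add, hij, hij.symm] using congrFun₂ hsq i i
    have e3 : q * d j + -(d i * q) = 0 := by
      simpa [Matrix.add_mul, Matrix.mul_add, hij, hij.symm] using congrFun₂ hinv i j
    have e4 : q * d j + d i * q = q / 2 := by
      simpa [Matrix.add_mul, Matrix.mul_add, hij, hij.symm] using congrFun₂ hsq i j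
    linear_combination (-8 / 9 : K) * (q * e1 + q * e2 - d i * (e4 - e3) + (e4 - e3) / 4)
  subst hq
  have hd : d = 1 := by
    ext a
    have hja : ¬(j = a ∧ i = a) := fun h => hij (h.2.trans h.1.symm)
    have e1 : d a * d a = 1 := by
      simpa [Matrix.add_mul, Matrix.mul_add, hij, hja] using congrFun₂ hinv a a
    have e2 : d a * d a = d a := by
      simpa [Matrix.add_mul, Matrix.mul_add, hij, hja] using congrFun₂ hsq a a
    rw [Pi.one_apply]
    linear_combination e1 - e2
  simp [hd, transvection]

section InvertingDiagonal

variable (C : GL n K ≃* GL n K) (hC : ∀ t, C (diagonalGL t) = (diagonalGL t)⁻¹)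
include hC

lemma map_transvectionGL_mul_diagonalGL {i j : n} (hij : i ≠ j) (t : n → Kˣ) (c : K) :
    C (transvectionGL hij c) * diagonalGL t =
      diagonalGL t * C (transvectionGL hij (t i * c / t j)) := by
  have h := congrArg C (diagonalGL_mul_transvectionGL hij t c)
  rw [map_mul, map_mul, hC] at h
  rw [← inv_mul_eq_iff_eq_mul, ← mul_assoc, h, inv_mul_cancel_right]

lemma map_transvectionGL_apply_mul {i j : n} (hij : i ≠ j) (t : n → Kˣ) (c : K) (a b : n) :
    (C (transvectionGL hij c) : Matrix n n K) a b * t b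
      = t a * (C (transvectionGL hij (t i * c / t j)) : Matrix n n K) a b := by
  simpa [mul_diagonal, diagonal_mul] using congrArg (fun g : GL n K => (g : Matrix n n K) a b)
    (map_transvectionGL_mul_diagonalGL C hC hij t c)

lemma map_transvectionGL_eq_diagonal_add_single_add_single [CharZero K] {i j : n} (hij : i ≠ j)
    (c : K) :
    (C (transvectionGL hij c) : Matrix n n K) =
      diagonal (fun a => (C (transvectionGL hij c) : Matrix n n K) a a)
        + single i j ((C (transvectionGL hij c) : Matrix n n K) i j)
        + single j i ((C (transvectionGL hij c) : Matrix n n K) j i) := by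
  ext a b
  by_cases hab : a = b
  · subst hab
    have : ¬(i = a ∧ j = a) := fun h => hij (h.1.trans h.2.symm)
    have : ¬(j = a ∧ i = a) := fun h => hij (h.2.trans h.1.symm)
    simp [*]
  by_cases hij' : a = i ∧ b = j
  · obtain ⟨rfl, rfl⟩ := hij'
    simp [hij, hij.symm]
  by_cases hji : a = j ∧ b = i
  · obtain ⟨rfl, rfl⟩ := hji
    simp [hij, hij.symm]
  have hrhs : ¬(i = a ∧ j = b) ∧ ¬(j = a ∧ i = b) := by grind
  simp only [add_apply, diagonal_apply_ne _ hab, single_apply, if_neg hrhs.1, if_neg hrhs.2,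
    add_zero]
  -- `t` is `2` on `{a}`, or on `{i, j}` if `a` lies there; so `t i = t j` but `t a ≠ t b`.
  set t : n → Kˣ := fun k => if k = a ∨ ((a = i ∨ a = j) ∧ (k = i ∨ k = j))
    then Units.mk0 2 two_ne_zero else 1 with ht
  have hti : t i = t j := by grind
  have hta : (t a : K) = 2 := by simp [ht]
  have htb : (t b : K) = 1 := by simp only [ht, Units.val_eq_one, ite_eq_right_iff]; grind
  have h := map_transvectionGL_apply_mul C hC hij t c a b
  rw [hti, mul_div_cancel_left₀ _ (t j).ne_zero, hta, htb] at h
  linear_combination -h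

lemma map_transvectionGL_mul_eq [CharZero K] {i j : n} (hij : i ≠ j) (c : K) {l : K}
    (hl : l ≠ 0) :
    (C (transvectionGL hij (l * c)) : Matrix n n K) =
      diagonal (fun a => (C (transvectionGL hij c) : Matrix n n K) a a)
        + single i j ((C (transvectionGL hij c) : Matrix n n K) i j / l)
        + single j i (l * (C (transvectionGL hij c) : Matrix n n K) j i) := by
  set t : n → Kˣ := Pi.mulSingle i (Units.mk0 l hl)
  have h := map_transvectionGL_apply_mul C hC hij t c
  have hl' : (t i : K) * c / t j = l * c := by simp [t, hij.symm]
  simp only [hl'] at h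
  rw [map_transvectionGL_eq_diagonal_add_single_add_single C hC hij]
  congr 3
  · ext a
    exact mul_left_cancel₀ (t a).ne_zero ((h a a).symm.trans (mul_comm _ _))
  · have hq := h i j
    simp only [t, Pi.mulSingle_eq_same, Pi.mulSingle_eq_of_ne hij.symm, Units.val_mk0,
      Units.val_one, mul_one] at hq
    rw [eq_div_iff hl, mul_comm, hq]
  · have hr := h j i
    simp only [t, Pi.mulSingle_eq_same, Pi.mulSingle_eq_of_ne hij.symm, Units.val_mk0,
      Units.val_one, one_mul] at hr
    rw [← hr, mul_comm]

lemma map_transvectionGL_eq_transvectionGL_apply [CharZero K] {i j : n} (hij : i ≠ j) (c : K) :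
    C (transvectionGL hij c) =
      transvectionGL hij.symm ((C (transvectionGL hij c) : Matrix n n K) j i) := by
  have hX := map_transvectionGL_eq_diagonal_add_single_add_single C hC hij c
  have hY := map_transvectionGL_mul_eq C hC hij c (l := -1) (by norm_num)
  have hZ := map_transvectionGL_mul_eq C hC hij c (l := 2) two_ne_zero
  rw [neg_one_mul, div_neg, div_one, neg_one_mul] at hY
  rw [two_mul] at hZ
  have hinv : (C (transvectionGL hij c) * C (transvectionGL hij (-c)) : Matrix n n K) = 1 := by
    rw [← Units.val_mul, ← map_mul, transvectionGL_mul_transvectionGL, add_neg_cancel,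
      transvectionGL_zero, map_one, Units.val_one]
  have hsq : (C (transvectionGL hij c) * C (transvectionGL hij c) : Matrix n n K) =
      C (transvectionGL hij (c + c)) := by
    rw [← Units.val_mul, ← map_mul, transvectionGL_mul_transvectionGL]
  rw [hX, hY] at hinv
  rw [hX, hZ] at hsq
  exact Units.ext (hX.trans (diagonal_add_single_add_single_eq_transvection hij _ _ _ hinv hsq))

lemma map_transvectionGL_apply_eq_mul [CharZero K] {i j : n} (hij : i ≠ j) (c : K) :
    (C (transvectionGL hij c) : Matrix n n K) j i =
      (C (transvectionGL hij 1) : Matrix n n K) j i * c := by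
  rcases eq_or_ne c 0 with rfl | hc
  · simp [one_apply_ne hij.symm]
  · simpa [hij.symm, mul_comm] using
      congrFun₂ (map_transvectionGL_mul_eq C hC hij 1 hc) j i

lemma map_transvectionGL [CharZero K] {i j : n} (hij : i ≠ j) (c : K) :
    C (transvectionGL hij c) =
      transvectionGL hij.symm ((C (transvectionGL hij 1) : Matrix n n K) j i * c) := by
  rw [map_transvectionGL_eq_transvectionGL_apply C hC hij,
    map_transvectionGL_apply_eq_mul C hC hij]

lemma map_transvectionGL_symm_apply_mul_map_transvectionGL_apply [CharZero K] {i j : n}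
    (hij : i ≠ j) :
    (C (transvectionGL hij.symm 1) : Matrix n n K) i j *
      (C (transvectionGL hij 1) : Matrix n n K) j i = 1 := by
  have hswap :
      (C (weylGL hij) : Matrix n n K) i i * 2⁻¹ = (C (weylGL hij) : Matrix n n K) i i := by
    have hw := congrArg C (weylGL_mul_diagonalGL_mulSingle hij (Units.mk0 (2 : K) two_ne_zero))
    rw [map_mul, map_mul, hC, hC] at hw
    simpa [-coe_units_inv, mul_diagonal, diagonal_mul, hij] using
      congrArg (fun g : GL n K => (g : Matrix n n K) i i) hw
  have hentry : (C (weylGL hij) : Matrix n n K) i i =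
      1 - (C (transvectionGL hij.symm 1) : Matrix n n K) i j *
        (C (transvectionGL hij 1) : Matrix n n K) j i := by
    rw [weylGL, map_mul, map_mul, map_transvectionGL C hC hij.symm, map_transvectionGL C hC hij]
    simp [transvection, Matrix.add_mul, Matrix.mul_add, hij, hij.symm, sub_eq_add_neg]
  rw [hentry] at hswap
  linear_combination 2 * hswap

lemma map_map_transvectionGL [CharZero K] {i j : n} (hij : i ≠ j) (c : K) :
    C (C (transvectionGL hij c)) = transvectionGL hij c := by
  rw [map_transvectionGL C hC hij c, map_transvectionGL C hC hij.symm, ← mul_assoc,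
    map_transvectionGL_symm_apply_mul_map_transvectionGL_apply C hC hij, one_mul]

lemma map_map_diagonalGL (t : n → Kˣ) : C (C (diagonalGL t)) = diagonalGL t := by
  rw [hC, map_inv, hC, inv_inv]

lemma involutive_of_map_diagonalGL_eq_inv [CharZero K] : Function.Involutive C := by
  have h : C.toMonoidHom.comp C.toMonoidHom = MonoidHom.id _ :=
    monoidHom_ext_diagonalGL_transvectionGL (map_map_diagonalGL C hC)
      fun _ _ hij c => map_map_transvectionGL C hC hij c
  exact DFunLike.congr_fun h

end InvertingDiagonal

end Matrix

theorem chevalley_involution_squares_to_one_general (n : ℕ)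
    (C : GL (Fin n) ℂ ≃* GL (Fin n) ℂ)
    (hinv : ∀ h : GL (Fin n) ℂ, (h : Matrix (Fin n) (Fin n) ℂ).IsDiag → C h = h⁻¹) :
    ∀ g : GL (Fin n) ℂ, C (C g) = g :=
  involutive_of_map_diagonalGL_eq_inv C fun _ => hinv _ (isDiag_diagonal _)

/-- A continuous group automorphism `C` of `GL(n,ℂ)` (continuous with
continuous inverse) satisfying `C(h) = h⁻¹` for every invertible diagonal matrix `h` is an
involution: `C ∘ C = id`. -/
theorem chevalley_involution_squares_to_one (n : ℕ) (hn : 1 ≤ n)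
    (C : GL (Fin n) ℂ ≃* GL (Fin n) ℂ)
    (hC : Continuous (⇑C)) (hCsymm : Continuous (⇑C.symm))
    (hinv : ∀ h : GL (Fin n) ℂ, (h : Matrix (Fin n) (Fin n) ℂ).IsDiag → C h = h⁻¹) :
    ∀ g : GL (Fin n) ℂ, C (C g) = g :=
  chevalley_involution_squares_to_one_general n C hinv
end

section
/- If τ₁ and τ₂ are group automorphisms of W_ℝ each satisfying τᵢ(z) = z⁻¹ for all z ∈ ℂˣ, then there exists u ∈ ℂˣ such that τ₂ = int(u) ∘ τ₁ ∘ int(u)⁻¹, where int(u) denotes the inner automorphism w ↦ uwu⁻¹ of W_ℝ. -/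
open Quaternion
open scoped Quaternion

noncomputable section

/-- The quaternion `j`. -/
def jq : ℍ[ℝ] := ⟨0, 0, 1, 0⟩

lemma jq_mul_jq : jq * jq = -1 := by
  have h0 : jq.re = 0 := rfl
  have h1 : jq.imI = 0 := rfl
  have h2 : jq.imJ = 1 := rfl
  have h3 : jq.imK = 0 := rfl
  ext <;> simp [h0, h1, h2, h3]

lemma jq_ne_zero : jq ≠ 0 := by
  intro h
  have := congrArg QuaternionAlgebra.imJ h
  simp [jq] at this

lemma coeComplex_ne_zero {z : ℂ} (hz : z ≠ 0) : (z : ℍ[ℝ]) ≠ 0 := by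
  intro h
  apply hz
  have hre := congrArg QuaternionAlgebra.re h
  have him := congrArg QuaternionAlgebra.imI h
  simp at hre him
  exact Complex.ext hre him

lemma coeComplex_neg (z : ℂ) : ((-z : ℂ) : ℍ[ℝ]) = -(z : ℍ[ℝ]) := by
  ext <;> simp

lemma coeComplex_inv (z : ℂ) : ((z⁻¹ : ℂ) : ℍ[ℝ]) = ((z : ℍ[ℝ]))⁻¹ := by
  have h := map_inv₀ Quaternion.ofComplex z
  rwa [Quaternion.coe_ofComplex] at h

lemma jq_mul_coeComplex (z : ℂ) : jq * (z : ℍ[ℝ]) = ((starRingEnd ℂ) z : ℂ) * jq := by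
  have h0 : jq.re = 0 := rfl
  have h1 : jq.imI = 0 := rfl
  have h2 : jq.imJ = 1 := rfl
  have h3 : jq.imK = 0 := rfl
  ext <;> simp [h0, h1, h2, h3]

/-- The real Weil group `W_ℝ`, realized inside the unit group of the Hamilton quaternions:
the subgroup of `ℍˣ` consisting of all (nonzero) elements of the form `z` or `z·j` with
`z ∈ ℂˣ`. -/
def WeilR : Subgroup (ℍ[ℝ])ˣ where
  carrier := {w | ∃ z : ℂ, z ≠ 0 ∧
    ((w : ℍ[ℝ]) = (z : ℍ[ℝ]) ∨ (w : ℍ[ℝ]) = (z : ℍ[ℝ]) * jq)}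
  one_mem' := ⟨1, one_ne_zero, Or.inl (by simp)⟩
  mul_mem' := by
    rintro a b ⟨z, hz, hza | hza⟩ ⟨w, hw, hwb | hwb⟩
    · exact ⟨z * w, mul_ne_zero hz hw, Or.inl (by push_cast [Units.val_mul, hza, hwb]; ring)⟩
    · exact ⟨z * w, mul_ne_zero hz hw, Or.inr (by
        push_cast [Units.val_mul, hza, hwb]; rw [mul_assoc])⟩
    · exact ⟨z * (starRingEnd ℂ) w, mul_ne_zero hz (by simpa using hw), Or.inr (by
        push_cast [Units.val_mul, hza, hwb]
        rw [mul_assoc, jq_mul_coeComplex w]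
        rw [mul_assoc])⟩
    · exact ⟨-(z * (starRingEnd ℂ) w), neg_ne_zero.mpr (mul_ne_zero hz (by simpa using hw)),
        Or.inl (by
          push_cast [Units.val_mul, hza, hwb]
          rw [mul_assoc, ← mul_assoc jq, jq_mul_coeComplex w, mul_assoc, jq_mul_jq,
            coeComplex_neg, coeComplex_mul]
          simp [mul_neg, mul_assoc])⟩
  inv_mem' := by
    rintro a ⟨z, hz, hza | hza⟩
    · refine ⟨z⁻¹, inv_ne_zero hz, Or.inl ?_⟩
      rw [Units.val_inv_eq_inv_val, hza, coeComplex_inv]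
    · refine ⟨-(((starRingEnd ℂ) z)⁻¹),
        neg_ne_zero.mpr (inv_ne_zero (by simpa using hz)), Or.inr ?_⟩
      rw [Units.val_inv_eq_inv_val, hza]
      refine inv_eq_of_mul_eq_one_right ?_
      rw [mul_assoc, ← mul_assoc jq, jq_mul_coeComplex, mul_assoc, jq_mul_jq]
      have : (starRingEnd ℂ) (-(((starRingEnd ℂ) z)⁻¹)) = -(z⁻¹) := by simp
      rw [this, coeComplex_neg, coeComplex_inv]
      simp [mul_neg, neg_mul]
      rw [mul_inv_cancel₀ (coeComplex_ne_zero hz)]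

/-- The element `z ∈ ℂˣ ⊂ W_ℝ`. -/
def cqW (z : ℂ) (hz : z ≠ 0) : WeilR :=
  ⟨Units.mk0 (z : ℍ[ℝ]) (coeComplex_ne_zero hz), ⟨z, hz, Or.inl rfl⟩⟩

/-- The element `j ∈ W_ℝ`. -/
def jW : WeilR :=
  ⟨Units.mk0 jq jq_ne_zero, ⟨1, one_ne_zero, Or.inr (by simp)⟩⟩

/-- The element `z·j ∈ W_ℝ` for `z ∈ ℂˣ`. -/
def zjW (z : ℂ) (hz : z ≠ 0) : WeilR :=
  ⟨Units.mk0 ((z : ℍ[ℝ]) * jq) (mul_ne_zero (coeComplex_ne_zero hz) jq_ne_zero),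
    ⟨z, hz, Or.inr rfl⟩⟩

end

/-!
`W_ℝ` is generated by `ℂˣ` and `j`, so an automorphism `τ` inverting `ℂˣ` is determined by `τ j`.
Injectivity rules out `τ j ∈ ℂˣ`, so `τ j = c j`, and `τ(j²) = τ(-1) = -1` forces `|c| = 1`.
For `|u| = 1` we have `j u = u⁻¹ j`, hence `int(u) ∘ τ ∘ int(u)⁻¹` still inverts `ℂˣ` and sends
`j` to `u⁴ c j`; a fourth root `u` of `c₂ / c₁`, which again has `|u| = 1`, does the job.
-/

lemma Complex.units_star_eq_inv_iff (z : ℂˣ) : star z = z⁻¹ ↔ ‖(z : ℂ)‖ = 1 := by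
  rw [eq_inv_iff_mul_eq_one, mul_comm, Units.ext_iff, Units.val_mul, Units.coe_star, Units.val_one, Complex.star_def, Complex.mul_conj']
  norm_cast
  exact pow_eq_one_iff_of_nonneg (norm_nonneg _) two_ne_zero

lemma Complex.exists_units_pow_eq_of_norm_eq_one {c : ℂˣ} (hc : ‖(c : ℂ)‖ = 1) {n : ℕ}
    (hn : n ≠ 0) : ∃ u : ℂˣ, ‖(u : ℂ)‖ = 1 ∧ u ^ n = c := by
  obtain ⟨u, hu⟩ := IsAlgClosed.exists_pow_nat_eq (c : ℂ) (Nat.pos_of_ne_zero hn)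
  have hu0 : u ≠ 0 := by
    rintro rfl
    exact c.ne_zero (by rw [← hu, zero_pow hn])
  refine ⟨Units.mk0 u hu0, ?_, Units.ext (by simpa using hu)⟩
  exact (pow_eq_one_iff_of_nonneg (norm_nonneg u) hn).mp (by rw [← norm_pow, hu, hc])

namespace WeilR

noncomputable def ofUnits : ℂˣ →* WeilR where
  toFun z := cqW z z.ne_zero
  map_one' := Subtype.ext <| Units.ext <| by simp [cqW]
  map_mul' z w := Subtype.ext <| Units.ext <| by simp [cqW]

lemma coe_ofUnits (z : ℂˣ) : ((ofUnits z : (ℍ[ℝ])ˣ) : ℍ[ℝ]) = (z : ℂ) := rfl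

lemma coe_jW : ((jW : (ℍ[ℝ])ˣ) : ℍ[ℝ]) = jq := rfl

lemma ofUnits_injective : Function.Injective ofUnits := fun z w h => by
  have h' : ((z : ℂ) : ℍ[ℝ]) = (w : ℂ) := congrArg (fun x : WeilR => ((x : (ℍ[ℝ])ˣ) : ℍ[ℝ])) h
  rw [← Quaternion.coe_ofComplex] at h'
  exact Units.ext (Quaternion.ofComplex.toRingHom.injective h')

lemma jW_mul_ofUnits (z : ℂˣ) : jW * ofUnits z = ofUnits (star z) * jW :=
  Subtype.ext <| Units.ext <| jq_mul_coeComplex z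

lemma jW_mul_jW : jW * jW = ofUnits (-1) :=
  Subtype.ext <| Units.ext <| by simp [coe_jW, coe_ofUnits, jq_mul_jq, coeComplex_neg]

lemma ofUnits_ne_jW (z : ℂˣ) : ofUnits z ≠ jW := fun h => by
  have := congrArg (fun x : WeilR => ((x : (ℍ[ℝ])ˣ) : ℍ[ℝ]).imJ) h
  simp [coe_ofUnits, coe_jW, jq] at this

lemma exists_eq_ofUnits_or_eq_ofUnits_mul_jW (w : WeilR) :
    ∃ z : ℂˣ, w = ofUnits z ∨ w = ofUnits z * jW := by
  obtain ⟨z, hz, h | h⟩ := w.2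
  · exact ⟨Units.mk0 z hz, Or.inl <| Subtype.ext <| Units.ext h⟩
  · exact ⟨Units.mk0 z hz, Or.inr <| Subtype.ext <| Units.ext h⟩

lemma hom_ext {M : Type*} [Monoid M] {f g : WeilR →* M} (h : f.comp ofUnits = g.comp ofUnits)
    (hj : f jW = g jW) : f = g := by
  ext w
  obtain ⟨z, rfl | rfl⟩ := exists_eq_ofUnits_or_eq_ofUnits_mul_jW w
  · exact DFunLike.congr_fun h z
  · rw [map_mul, map_mul, hj]
    exact congrArg (· * g jW) (DFunLike.congr_fun h z)

lemma jW_mul_ofUnits_of_norm_eq_one {u : ℂˣ} (hu : ‖(u : ℂ)‖ = 1) :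
    jW * ofUnits u = ofUnits u⁻¹ * jW := by
  rw [jW_mul_ofUnits, (Complex.units_star_eq_inv_iff u).2 hu]

lemma exists_map_jW_eq {f : WeilR →* WeilR} (hf : Function.Injective f)
    (hinv : ∀ z, f (ofUnits z) = (ofUnits z)⁻¹) :
    ∃ c : ℂˣ, ‖(c : ℂ)‖ = 1 ∧ f jW = ofUnits c * jW := by
  obtain ⟨c, hc | hc⟩ := exists_eq_ofUnits_or_eq_ofUnits_mul_jW (f jW)
  · refine absurd (hf ?_) (ofUnits_ne_jW c⁻¹)
    rw [hinv, map_inv, inv_inv, hc]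
  · refine ⟨c, ?_, hc⟩
    have hsq : ofUnits (c * star c * -1) = ofUnits (-1) := calc
      ofUnits (c * star c * -1) = ofUnits c * (jW * ofUnits c) * jW := by
          rw [jW_mul_ofUnits, map_mul, map_mul, ← jW_mul_jW]; group
      _ = f (jW * jW) := by rw [map_mul, hc]; group
      _ = ofUnits (-1) := by rw [jW_mul_jW, hinv, ← map_inv, inv_neg_one]
    rw [← Complex.units_star_eq_inv_iff, eq_inv_iff_mul_eq_one, mul_comm]
    simpa using ofUnits_injective hsq

lemma conj_map_jW {f : WeilR →* WeilR} (hinv : ∀ z, f (ofUnits z) = (ofUnits z)⁻¹) {c u : ℂˣ}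
    (hc : f jW = ofUnits c * jW) (hu : ‖(u : ℂ)‖ = 1) :
    ofUnits u * f ((ofUnits u)⁻¹ * jW * ofUnits u) * (ofUnits u)⁻¹ = ofUnits (u ^ 4 * c) * jW := by
  have hu' : ‖((u⁻¹ : ℂˣ) : ℂ)‖ = 1 := by simpa using hu
  calc ofUnits u * f ((ofUnits u)⁻¹ * jW * ofUnits u) * (ofUnits u)⁻¹
      = ofUnits u * f (ofUnits (u⁻¹ * u⁻¹) * jW) * ofUnits u⁻¹ := by
        rw [mul_assoc _ jW, jW_mul_ofUnits_of_norm_eq_one hu, ← mul_assoc, ← map_inv,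
          ← map_mul ofUnits]
    _ = ofUnits (u * (u⁻¹ * u⁻¹)⁻¹ * c) * (jW * ofUnits u⁻¹) := by
        rw [map_mul f, hinv, hc, ← map_inv, map_mul, map_mul]; group
    _ = ofUnits (u ^ 4 * c) * jW := by
        rw [jW_mul_ofUnits_of_norm_eq_one hu', inv_inv, ← mul_assoc, ← map_mul]
        congr 1
        simp only [mul_inv_rev, inv_inv, pow_succ, pow_zero, one_mul]
        ac_rfl

end WeilR

open WeilR in
/-- Any two automorphisms of `W_ℝ` inverting `ℂˣ` pointwise are conjugate
by an inner automorphism `int(u)` with `u ∈ ℂˣ`: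
`τ₂ = int(u) ∘ τ₁ ∘ int(u)⁻¹`. -/
theorem weil_chevalley_conjugate_by_inner (τ₁ τ₂ : WeilR ≃* WeilR)
    (h₁ : ∀ (z : ℂ) (hz : z ≠ 0), τ₁ (cqW z hz) = (cqW z hz)⁻¹)
    (h₂ : ∀ (z : ℂ) (hz : z ≠ 0), τ₂ (cqW z hz) = (cqW z hz)⁻¹) :
    ∃ (u : ℂ) (hu : u ≠ 0), ∀ w : WeilR,
      τ₂ w = cqW u hu * τ₁ ((cqW u hu)⁻¹ * w * cqW u hu) * (cqW u hu)⁻¹ := by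
  have hinv₁ : ∀ z, τ₁ (ofUnits z) = (ofUnits z)⁻¹ := fun z => h₁ z z.ne_zero
  have hinv₂ : ∀ z, τ₂ (ofUnits z) = (ofUnits z)⁻¹ := fun z => h₂ z z.ne_zero
  obtain ⟨c₁, hc₁, hj₁⟩ := exists_map_jW_eq (f := τ₁.toMonoidHom) τ₁.injective hinv₁
  obtain ⟨c₂, hc₂, hj₂⟩ := exists_map_jW_eq (f := τ₂.toMonoidHom) τ₂.injective hinv₂
  obtain ⟨u, hu, hu4⟩ :=
    Complex.exists_units_pow_eq_of_norm_eq_one (c := c₂ * c₁⁻¹) (by simp [hc₁, hc₂]) four_ne_zero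
  let σ : WeilR →* WeilR := (MulAut.conj (ofUnits u)).toMonoidHom.comp
    (τ₁.toMonoidHom.comp (MulAut.conj (ofUnits u)).symm.toMonoidHom)
  have hσ : τ₂.toMonoidHom = σ := by
    refine hom_ext (MonoidHom.ext fun z => ?_) ?_
    · have hcomm := (Commute.all u z).map ofUnits
      simp only [σ, MonoidHom.comp_apply, MulEquiv.coe_toMonoidHom, MulAut.conj_apply,
        MulAut.conj_symm_apply, hcomm.inv_mul_cancel, hinv₁, hinv₂, hcomm.inv_right.mul_inv_cancel]
    · rw [hj₂, ← inv_mul_cancel_right c₂ c₁, ← hu4]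
      exact (conj_map_jW (f := τ₁.toMonoidHom) hinv₁ hj₁ hu).symm
  exact ⟨u, u.ne_zero, DFunLike.congr_fun hσ⟩
end

section
/- Let w ∈ Sₙ, and let (i₁,…,i_ℓ) be a reduced word for w and (j₁,…,j_m) a reduced word for w⁻¹. Then the product σ(i₁,…,i_ℓ)·σ(j₁,…,j_m) is the diagonal matrix whose k-th diagonal entry is (−1)^{k + w⁻¹(k)} for 1 ≤ k ≤ n. -/
open Matrix

noncomputable section

/-- The element `i` of `{1,…,n−1}` viewed in `Fin n` (0-indexed: position `i`). -/
def finA {n : ℕ} (i : Fin (n - 1)) : Fin n := ⟨i.val, by have := i.isLt; omega⟩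

/-- The element `i+1` of `{1,…,n}` viewed in `Fin n` (0-indexed: position `i+1`). -/
def finB {n : ℕ} (i : Fin (n - 1)) : Fin n := ⟨i.val + 1, by have := i.isLt; omega⟩

/-- The Tits representative `σ_i ∈ GL(n,ℂ)` of the simple reflection `s_i = (i,i+1)`:
it agrees with the identity matrix except in rows and columns `i, i+1`, where its entries
are `(σ_i)_{i,i} = (σ_i)_{i+1,i+1} = 0`, `(σ_i)_{i,i+1} = 1`, `(σ_i)_{i+1,i} = −1`. -/
def sigmaMat (n : ℕ) (i : Fin (n - 1)) : Matrix (Fin n) (Fin n) ℂ :=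
  1 - Matrix.single (finA i) (finA i) 1 - Matrix.single (finB i) (finB i) 1
    + Matrix.single (finA i) (finB i) 1 - Matrix.single (finB i) (finA i) 1

/-- The simple reflection `s_i = (i,i+1)` in the symmetric group `Sₙ`. -/
def simpleRefl {n : ℕ} (i : Fin (n - 1)) : Equiv.Perm (Fin n) := Equiv.swap (finA i) (finB i)

/-- The permutation `s_{i₁} ∘ ⋯ ∘ s_{i_ℓ}` attached to the word `(i₁,…,i_ℓ)`. -/
def wordPerm {n : ℕ} (l : List (Fin (n - 1))) : Equiv.Perm (Fin n) :=
  (l.map simpleRefl).prod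

/-- The matrix `σ(i₁,…,i_ℓ) = σ_{i₁} ⋯ σ_{i_ℓ}` attached to the word `(i₁,…,i_ℓ)`. -/
def wordMat (n : ℕ) (l : List (Fin (n - 1))) : Matrix (Fin n) (Fin n) ℂ :=
  (l.map (sigmaMat n)).prod

/-- The Coxeter length of `w ∈ Sₙ`: the number of inversions. -/
def invCount {n : ℕ} (w : Equiv.Perm (Fin n)) : ℕ :=
  (Finset.univ.filter fun p : Fin n × Fin n => p.1 < p.2 ∧ w p.2 < w p.1).card

/-- `(i₁,…,i_ℓ)` is a reduced word for `w`: the product of the corresponding simple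
reflections is `w` and the length of the word equals the number of inversions of `w`. -/
def IsReducedWord {n : ℕ} (l : List (Fin (n - 1))) (w : Equiv.Perm (Fin n)) : Prop :=
  wordPerm l = w ∧ l.length = invCount w

/-- The diagonal matrix `d` with entries `d_{kk} = (−1)^{k−1}` (1-indexed), used in the
pinned Chevalley involution `C_P(g) = d (gᵀ)⁻¹ d⁻¹` of `GL(n,ℂ)`. -/
def dMat (n : ℕ) : Matrix (Fin n) (Fin n) ℂ := Matrix.diagonal fun k => (-1 : ℂ) ^ (k : ℕ)

end

/-! If `(i₁,…,i_ℓ)` is a reduced word for `w`, then `σ_{i₁} ⋯ σ_{i_ℓ}` sends `e_b` to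
`(-1)^{N_w(b)} e_{w b}`, where `N_w(b) = #{j > b | w j < w b}` counts the inversions of `w`
starting at `b`. Indeed, if `w⁻¹ i < w⁻¹ (i+1)` then `s_i w` has exactly one inversion more than
`w`, namely `(w⁻¹ i, w⁻¹ (i+1))`, and left multiplication by `σ_i` flips the sign of exactly
the column `w⁻¹ i`. Reducedness of the word forces this at every step, since the inversion count
changes by `±1` under each `s_i`. Hence the product of the two words is diagonal with entries
`(-1)^{N_w(w⁻¹ k) + N_{w⁻¹}(k)}`, and this exponent is `k + w⁻¹ k` minus twice the number of
`j < w⁻¹ k` with `w j < k`. -/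

open Finset

section SignedPermMatrix

variable {α R : Type*} [DecidableEq α] [Semiring R]

def signedPermMatrix (w : Equiv.Perm α) (ε : α → R) : Matrix α α R :=
  Matrix.of fun a b => if a = w b then ε b else 0

lemma signedPermMatrix_mul [Fintype α] (w v : Equiv.Perm α) (ε δ : α → R) :
    signedPermMatrix w ε * signedPermMatrix v δ =
      signedPermMatrix (w * v) fun b => ε (v b) * δ b := by
  ext a b
  rw [Matrix.mul_apply, sum_eq_single (v b)]
  · simp only [signedPermMatrix, Matrix.of_apply, ite_mul, zero_mul]
    rfl
  · intro j _ hj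
    simp [signedPermMatrix, hj]
  · simp

lemma signedPermMatrix_one (ε : α → R) : signedPermMatrix 1 ε = diagonal ε := by
  ext a b
  simp only [signedPermMatrix, Matrix.of_apply, Equiv.Perm.one_apply, diagonal_apply]
  split_ifs with h <;> simp [h]

end SignedPermMatrix

variable {n : ℕ}

@[simp]
lemma wordPerm_nil : wordPerm ([] : List (Fin (n - 1))) = 1 := rfl

@[simp]
lemma wordPerm_cons (i : Fin (n - 1)) (l : List (Fin (n - 1))) :
    wordPerm (i :: l) = simpleRefl i * wordPerm l := rfl

@[simp]
lemma wordMat_nil : wordMat n [] = 1 := rfl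

@[simp]
lemma wordMat_cons (i : Fin (n - 1)) (l : List (Fin (n - 1))) :
    wordMat n (i :: l) = sigmaMat n i * wordMat n l := rfl

lemma finA_lt_finB (i : Fin (n - 1)) : finA (n := n) i < finB i := by
  simp [finA, finB, Fin.lt_def]

lemma inv_finA_ne_inv_finB (w : Equiv.Perm (Fin n)) (i : Fin (n - 1)) :
    w⁻¹ (finA i) ≠ w⁻¹ (finB i) :=
  w⁻¹.injective.ne (finA_lt_finB i).ne

lemma sigmaMat_eq_signedPermMatrix (i : Fin (n - 1)) :
    sigmaMat n i = signedPermMatrix (simpleRefl i) fun b => if b = finA i then -1 else 1 := by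
  ext a b
  simp only [sigmaMat, signedPermMatrix, simpleRefl, Matrix.of_apply, Matrix.sub_apply,
    Matrix.add_apply, Matrix.one_apply, Matrix.single_apply, Equiv.swap_apply_def]
  grind

def invCountAt (w : Equiv.Perm (Fin n)) (b : Fin n) : ℕ :=
  #{j | b < j ∧ w j < w b}

lemma invCount_eq_sum_invCountAt (w : Equiv.Perm (Fin n)) :
    invCount w = ∑ b, invCountAt w b := by
  simp only [invCount, invCountAt, card_filter, Fintype.sum_prod_type]

lemma invCountAt_one (b : Fin n) : invCountAt 1 b = 0 := by
  rw [invCountAt, card_eq_zero, filter_eq_empty_iff]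
  exact fun _ _ h => lt_asymm h.1 h.2

lemma invCount_one : invCount (1 : Equiv.Perm (Fin n)) = 0 := by
  simp [invCount_eq_sum_invCountAt, invCountAt_one]

lemma val_simpleRefl (i : Fin (n - 1)) (x : Fin n) :
    (simpleRefl i x : ℕ) =
      if (x : ℕ) = i then (i : ℕ) + 1 else if (x : ℕ) = (i : ℕ) + 1 then (i : ℕ) else x := by
  simp only [simpleRefl, Equiv.swap_apply_def, finA, finB, Fin.ext_iff]
  split_ifs <;> simp_all

lemma invCountAt_simpleRefl_mul {i : Fin (n - 1)} {w : Equiv.Perm (Fin n)}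
    (h : w⁻¹ (finA i) < w⁻¹ (finB i)) (b : Fin n) :
    invCountAt (simpleRefl i * w) b = invCountAt w b + if w b = finA i then 1 else 0 := by
  have hAB : ∀ x y, w x = finA i → w y = finB i → x < y := by
    intro x y hx hy
    simpa [← hx, ← hy] using h
  -- `s_i` preserves the order of every pair of values except `{i, i+1}`
  have hterm : ∀ j, (if b < j ∧ simpleRefl i (w j) < simpleRefl i (w b) then 1 else 0) =
      (if b < j ∧ w j < w b then 1 else 0) +
        if j = w⁻¹ (finB i) then (if w b = finA i then 1 else 0) else 0 := by
    intro j
    have hbj := hAB b j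
    have hjb := hAB j b
    have hinj : (j : ℕ) = b ↔ (w j : ℕ) = w b := by
      rw [← Fin.ext_iff, ← Fin.ext_iff, w.injective.eq_iff]
    simp only [Equiv.Perm.eq_inv_iff_eq, Fin.lt_def, Fin.ext_iff, val_simpleRefl, finA, finB]
      at hbj hjb hinj ⊢
    split_ifs <;> omega
  calc invCountAt (simpleRefl i * w) b
      = ∑ j, ((if b < j ∧ w j < w b then 1 else 0) +
          if j = w⁻¹ (finB i) then (if w b = finA i then 1 else 0) else 0) := by
        rw [invCountAt, card_filter]
        exact sum_congr rfl fun j _ => hterm j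
    _ = invCountAt w b + if w b = finA i then 1 else 0 := by
        rw [sum_add_distrib, sum_ite_eq', invCountAt, card_filter]
        simp

lemma invCount_simpleRefl_mul {i : Fin (n - 1)} {w : Equiv.Perm (Fin n)}
    (h : w⁻¹ (finA i) < w⁻¹ (finB i)) :
    invCount (simpleRefl i * w) = invCount w + 1 := by
  simp only [invCount_eq_sum_invCountAt, invCountAt_simpleRefl_mul h, sum_add_distrib,
    ← Equiv.Perm.eq_inv_iff_eq, sum_ite_eq', mem_univ, if_true]

lemma invCount_simpleRefl_mul_of_gt {i : Fin (n - 1)} {w : Equiv.Perm (Fin n)}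
    (h : w⁻¹ (finB i) < w⁻¹ (finA i)) :
    invCount (simpleRefl i * w) + 1 = invCount w := by
  have h' : (simpleRefl i * w)⁻¹ (finA i) < (simpleRefl i * w)⁻¹ (finB i) := by
    simpa [simpleRefl, Equiv.swap_inv] using h
  simpa [← mul_assoc, simpleRefl] using (invCount_simpleRefl_mul h').symm

lemma invCount_wordPerm_le_length (l : List (Fin (n - 1))) :
    invCount (wordPerm l) ≤ l.length := by
  induction l with
  | nil => simp [invCount_one]
  | cons i l ih =>
    rw [wordPerm_cons, List.length_cons]
    rcases (inv_finA_ne_inv_finB (wordPerm l) i).lt_or_gt with hlt | hgt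
    · rw [invCount_simpleRefl_mul hlt]
      omega
    · have := invCount_simpleRefl_mul_of_gt hgt
      omega

lemma IsReducedWord.of_cons {i : Fin (n - 1)} {l : List (Fin (n - 1))} {w : Equiv.Perm (Fin n)}
    (h : IsReducedWord (i :: l) w) :
    IsReducedWord l (wordPerm l) ∧ (wordPerm l)⁻¹ (finA i) < (wordPerm l)⁻¹ (finB i) := by
  obtain ⟨rfl, hlen⟩ := h
  have hle := invCount_wordPerm_le_length l
  rw [wordPerm_cons, List.length_cons] at hlen
  rcases (inv_finA_ne_inv_finB (wordPerm l) i).lt_or_gt with hlt | hgt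
  · rw [invCount_simpleRefl_mul hlt] at hlen
    exact ⟨⟨rfl, by omega⟩, hlt⟩
  · have := invCount_simpleRefl_mul_of_gt hgt
    omega

def titsSign (w : Equiv.Perm (Fin n)) (b : Fin n) : ℂ := (-1) ^ invCountAt w b

lemma titsSign_one : titsSign (1 : Equiv.Perm (Fin n)) = 1 := by
  funext b
  simp [titsSign, invCountAt_one]

lemma titsSign_simpleRefl_mul {i : Fin (n - 1)} {w : Equiv.Perm (Fin n)}
    (h : w⁻¹ (finA i) < w⁻¹ (finB i)) (b : Fin n) :
    titsSign (simpleRefl i * w) b = (if w b = finA i then -1 else 1) * titsSign w b := by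
  rw [titsSign, titsSign, invCountAt_simpleRefl_mul h]
  split_ifs <;> simp [pow_succ, mul_comm]

lemma wordMat_eq_signedPermMatrix {l : List (Fin (n - 1))} {w : Equiv.Perm (Fin n)}
    (h : IsReducedWord l w) : wordMat n l = signedPermMatrix w (titsSign w) := by
  induction l generalizing w with
  | nil =>
    obtain ⟨rfl, -⟩ := h
    rw [wordMat_nil, wordPerm_nil, titsSign_one, signedPermMatrix_one, Pi.one_def, diagonal_one]
  | cons i l ih =>
    obtain ⟨hl, hlt⟩ := h.of_cons
    obtain ⟨rfl, -⟩ := h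
    rw [wordMat_cons, ih hl, sigmaMat_eq_signedPermMatrix, signedPermMatrix_mul, wordPerm_cons]
    congr 1
    funext b
    rw [titsSign_simpleRefl_mul hlt]

lemma sum_ite_lt (c : Fin n) : ∑ k, (if k < c then 1 else 0) = (c : ℕ) := by
  rw [← card_filter, filter_gt_eq_Iio, Fin.card_Iio]

lemma invCountAt_add_invCountAt_inv (w : Equiv.Perm (Fin n)) (c : Fin n) :
    invCountAt w c + invCountAt w⁻¹ (w c) + 2 * #{k | k < c ∧ w k < w c} = c + w c := by
  have hwc : ∑ k, (if w k < w c then 1 else 0) = (w c : ℕ) := by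
    rw [Equiv.sum_comp w fun x => if x < w c then 1 else 0, sum_ite_lt]
  have hinv : invCountAt w⁻¹ (w c) = ∑ k, if w c < w k ∧ k < c then 1 else 0 := by
    rw [invCountAt, card_filter, ← Equiv.sum_comp w]
    simp [and_comm]
  rw [invCountAt, card_filter, hinv, card_filter, ← sum_ite_lt c, ← hwc, mul_sum,
    ← sum_add_distrib, ← sum_add_distrib, ← sum_add_distrib]
  refine sum_congr rfl fun k _ => ?_
  have hinj : (k : ℕ) = c ↔ (w k : ℕ) = w c := by
    rw [← Fin.ext_iff, ← Fin.ext_iff, w.injective.eq_iff]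
  simp only [Fin.lt_def] at hinj ⊢
  split_ifs <;> omega

lemma titsSign_mul_titsSign_inv (w : Equiv.Perm (Fin n)) (b : Fin n) :
    titsSign w (w⁻¹ b) * titsSign w⁻¹ b = (-1) ^ (b.val + (w⁻¹ b).val) := by
  obtain ⟨c, rfl⟩ := w.surjective b
  simp only [Equiv.Perm.coe_inv, Equiv.symm_apply_apply]
  rw [titsSign, titsSign, ← pow_add, add_comm (w c : ℕ), ← invCountAt_add_invCountAt_inv,
    pow_add _ _ (2 * _), pow_mul]
  simp

theorem tits_sigma_mul_sigma_inv_general (n : ℕ) (w : Equiv.Perm (Fin n))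
    (l m : List (Fin (n - 1))) (hl : IsReducedWord l w) (hm : IsReducedWord m w⁻¹) :
    wordMat n l * wordMat n m =
      Matrix.diagonal (fun k : Fin n => (-1 : ℂ) ^ (k.val + ((w⁻¹) k).val)) := by
  rw [wordMat_eq_signedPermMatrix hl, wordMat_eq_signedPermMatrix hm, signedPermMatrix_mul,
    mul_inv_cancel, signedPermMatrix_one]
  exact congrArg diagonal (funext (titsSign_mul_titsSign_inv w))

/-- If `(i₁,…,i_ℓ)` is a reduced word for `w ∈ Sₙ` and `(j₁,…,j_m)` a
reduced word for `w⁻¹`, then `σ(i₁,…,i_ℓ)·σ(j₁,…,j_m)` is the diagonal matrix with `k`-th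
diagonal entry `(−1)^{k + w⁻¹(k)}`. -/
theorem tits_sigma_mul_sigma_inv (n : ℕ) (hn : 1 ≤ n) (w : Equiv.Perm (Fin n))
    (l m : List (Fin (n - 1))) (hl : IsReducedWord l w) (hm : IsReducedWord m w⁻¹) :
    wordMat n l * wordMat n m =
      Matrix.diagonal (fun k : Fin n => (-1 : ℂ) ^ (k.val + ((w⁻¹) k).val)) :=
  tits_sigma_mul_sigma_inv_general n w l m hl hm
end
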